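/- arXiv:1008.0809 — 3 statements merged into one kernel-verified Lean document; each statement's English description precedes it below -/
import Mathlib

section
/- The set of non-zero integers is Diophantine over ℤ via the following explicit definition: for every t ∈ ℤ, t ≠ 0 if and only if there exist x, u, v ∈ ℤ such that (2u − 1)(3v − 1) = t·x. -/
theorem Int.exists_eq_two_pow_mul_odd {t : ℤ} (ht : t ≠ 0) :
    ∃ (k : ℕ) (m : ℤ), Odd m ∧ t = 2 ^ k * m := by
  obtain ⟨m, hm, hm_odd⟩ :=
    (Int.finiteMultiplicity_iff (a := 2).2 ⟨by decide, ht⟩).exists_eq_pow_mul_and_not_dvd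
  exact ⟨_, m, Int.not_even_iff_odd.1 (by rwa [even_iff_two_dvd]), hm⟩

theorem exists_three_mul_sub_one_eq_two_pow_two_mul_add_one (k : ℕ) :
    ∃ v : ℤ, 3 * v - 1 = 2 ^ (2 * k + 1) := by
  obtain ⟨c, hc⟩ : (4 : ℤ) - 1 ∣ 4 ^ k - 1 ^ k := sub_dvd_pow_sub_pow 4 1 k
  refine ⟨2 * c + 1, ?_⟩
  rw [pow_succ, pow_mul]
  norm_num at hc ⊢
  linarith

/-- The set of non-zero integers is Diophantine over `ℤ` via the explicit definition:
`t ≠ 0` iff `(2u - 1)(3v - 1) = t·x` for some integers `x, u, v`. -/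
theorem nonzero_int_diophantine :
    ∀ t : ℤ, t ≠ 0 ↔ ∃ x u v : ℤ, (2 * u - 1) * (3 * v - 1) = t * x := by
  intro t
  constructor
  · intro ht
    -- With `t = 2^k m`, take `2u - 1 = m` and `3v - 1 = 2^(2k+1)`, the odd power of 2 being `≡ 2 mod 3`.
    obtain ⟨k, m, ⟨u, rfl⟩, rfl⟩ := Int.exists_eq_two_pow_mul_odd ht
    obtain ⟨v, hv⟩ := exists_three_mul_sub_one_eq_two_pow_two_mul_add_one k
    refine ⟨2 ^ (k + 1), u + 1, v, ?_⟩
    rw [hv]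
    ring
  · rintro ⟨x, u, v, h⟩ rfl
    exact mul_ne_zero (by omega) (by omega) (h.trans (zero_mul x))
end

section
/- If the set of integers ℤ, viewed as a subset of ℚ, is Diophantine over ℚ, then for every m and every subset A ⊆ ℤ^m which is Diophantine over ℤ, the set A viewed as a subset of ℚ^m is Diophantine over ℚ. -/
/-- A subset `A ⊆ R^ι` (for a finite index type `ι`) is *Diophantine* over a commutative
ring `R` if there are `k ∈ ℕ` and a polynomial `p` with coefficients in `R` such that a
tuple `t` lies in `A` iff `p(t, x) = 0` has a solution `x ∈ R^k`. -/
def IsDiophantine (R : Type*) [CommRing R] (ι : Type) [Fintype ι] (A : Set (ι → R)) : Prop :=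
  ∃ (k : ℕ) (p : MvPolynomial (ι ⊕ Fin k) R),
    ∀ t : ι → R, t ∈ A ↔ ∃ x : Fin k → R, MvPolynomial.eval (Sum.elim t x) p = 0

/-! Over a formally real ring such as `ℚ`, a finite system `p₁ = ⋯ = pₙ = 0` is equivalent to
the single equation `∑ pᵢ² = 0`, so Diophantine sets are closed under finite intersections; they
are also closed under coordinate preimages and under projections. The image in `ℚ^m` of a set
`A ⊆ ℤ^m` cut out by `p(t, x) = 0` is the projection of the set of rational zeros `(t, x)` of `p`
all of whose coordinates are integers, and each integrality condition is Diophantine over `ℚ`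
by hypothesis. -/

open MvPolynomial

theorem IsFormallyReal.sum_mul_self_eq_zero_iff {R ι : Type*} [Ring R] [IsFormallyReal R]
    (s : Finset ι) (f : ι → R) : ∑ i ∈ s, f i * f i = 0 ↔ ∀ i ∈ s, f i = 0 := by
  classical
  refine ⟨fun h i hi => ?_, fun h => Finset.sum_eq_zero fun i hi => by rw [h i hi, mul_zero]⟩
  rw [← Finset.add_sum_erase s _ hi] at h
  have hsq : f i * f i = 0 :=
    eq_zero_of_add_right (IsSumSq.mul_self _) (IsSumSq.sum_mul_self _ _) h
  exact IsReduced.eq_zero _ ⟨2, by rwa [sq]⟩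

theorem MvPolynomial.eval_comp_map_eq_zero_iff {R S σ : Type*} [CommSemiring R] [CommSemiring S]
    {f : R →+* S} (hf : Function.Injective f) (v : σ → R) (p : MvPolynomial σ R) :
    eval (f ∘ v) (map f p) = 0 ↔ eval v p = 0 := by
  rw [← map_eval, map_eq_zero_iff f hf]

namespace IsDiophantine

variable {R : Type*} [CommRing R] {ι : Type} [Fintype ι]

theorem of_fintype_witnesses (σ : Type) [Fintype σ] (p : MvPolynomial (ι ⊕ σ) R) {A : Set (ι → R)}
    (h : ∀ t, t ∈ A ↔ ∃ x : σ → R, eval (Sum.elim t x) p = 0) : IsDiophantine R ι A := by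
  let e := Fintype.equivFin σ
  refine ⟨Fintype.card σ, rename (Sum.map id e) p, fun t => (h t).trans ?_⟩
  simp only [eval_rename, Sum.elim_comp_map, Function.comp_id]
  exact (e.arrowCongr (Equiv.refl R)).exists_congr_left

theorem zeroLocus (p : MvPolynomial ι R) : IsDiophantine R ι {t | eval t p = 0} :=
  of_fintype_witnesses Empty (rename Sum.inl p) fun t => by
    simp [eval_rename, Sum.elim_comp_inl]

theorem preimage_comp {κ : Type} [Fintype κ] {A : Set (κ → R)} (hA : IsDiophantine R κ A)
    (f : κ → ι) : IsDiophantine R ι {t | t ∘ f ∈ A} := by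
  obtain ⟨k, p, hp⟩ := hA
  exact ⟨k, rename (Sum.map f id) p, fun t => by
    simp only [eval_rename, Sum.elim_comp_map, Function.comp_id]; exact hp (t ∘ f)⟩

theorem iInter [IsFormallyReal R] {J : Type} [Fintype J] {A : J → Set (ι → R)}
    (hA : ∀ j, IsDiophantine R ι (A j)) : IsDiophantine R ι (⋂ j, A j) := by
  choose k p hp using hA
  refine of_fintype_witnesses (Σ j, Fin (k j))
    (∑ j, rename (Sum.map id (Sigma.mk j)) (p j) * rename (Sum.map id (Sigma.mk j)) (p j))
    fun t => ?_
  simp only [map_sum, map_mul, eval_rename, Sum.elim_comp_map, Function.comp_id,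
    IsFormallyReal.sum_mul_self_eq_zero_iff, Finset.mem_univ, true_implies, Set.mem_iInter, hp]
  refine ⟨fun h => ?_, fun ⟨x, hx⟩ j => ⟨_, hx j⟩⟩
  choose y hy using h
  exact ⟨fun s => y s.1 s.2, hy⟩

theorem inter [IsFormallyReal R] {A B : Set (ι → R)} (hA : IsDiophantine R ι A)
    (hB : IsDiophantine R ι B) : IsDiophantine R ι (A ∩ B) := by
  rw [Set.inter_eq_iInter]
  exact iInter (Bool.rec hB hA)

theorem exists_sumElim_mem {κ : Type} [Fintype κ] {B : Set (ι ⊕ κ → R)}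
    (hB : IsDiophantine R (ι ⊕ κ) B) : IsDiophantine R ι {t | ∃ x : κ → R, Sum.elim t x ∈ B} := by
  obtain ⟨k, p, hp⟩ := hB
  refine of_fintype_witnesses (κ ⊕ Fin k) (rename (Equiv.sumAssoc ι κ (Fin k)) p) fun t => ?_
  simp only [eval_rename, Set.mem_ofPred_eq, hp, Sum.exists_sum]
  refine exists_congr fun x => exists_congr fun y => ?_
  have hassoc :
      Sum.elim t (Sum.elim x y) ∘ Equiv.sumAssoc ι κ (Fin k) = Sum.elim (Sum.elim t x) y := by
    ext ((i | j) | l) <;> rfl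
  rw [← hassoc]
  rfl

end IsDiophantine

/-- If `ℤ`, viewed as a subset of `ℚ`, is Diophantine over `ℚ`, then every subset of
`ℤ^m` which is Diophantine over `ℤ`, viewed as a subset of `ℚ^m`, is Diophantine
over `ℚ`. -/
theorem diophantine_over_Q_of_int_diophantine
    (hZ : IsDiophantine ℚ (Fin 1) {t | ∃ n : ℤ, t 0 = (n : ℚ)}) :
    ∀ (m : ℕ) (A : Set (Fin m → ℤ)), IsDiophantine ℤ (Fin m) A →
      IsDiophantine ℚ (Fin m) {t | ∃ a : Fin m → ℤ, a ∈ A ∧ ∀ i, t i = (a i : ℚ)} := by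
  rintro m A ⟨k, p, hp⟩
  have hB : IsDiophantine ℚ (Fin m ⊕ Fin k)
      ((⋂ v, {s | ∃ n : ℤ, s v = n}) ∩ {s | eval s (map (Int.castRingHom ℚ) p) = 0}) :=
    (IsDiophantine.iInter fun v => hZ.preimage_comp fun _ => v).inter (.zeroLocus _)
  convert hB.exists_sumElim_mem using 1
  ext t
  simp only [Set.mem_ofPred_eq, Set.mem_inter_iff, Set.mem_iInter]
  constructor
  · rintro ⟨a, haA, hta⟩
    obtain ⟨x, hx⟩ := (hp a).1 haA
    refine ⟨(↑) ∘ x, fun v => ?_, ?_⟩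
    · rcases v with i | j
      exacts [⟨a i, hta i⟩, ⟨x j, rfl⟩]
    · have hcast : Sum.elim t ((↑) ∘ x) = Int.castRingHom ℚ ∘ Sum.elim a x := by
        ext (i | j)
        exacts [hta i, rfl]
      rwa [hcast, eval_comp_map_eq_zero_iff Int.cast_injective]
  · rintro ⟨x, hint, hzero⟩
    choose n hn using hint
    rw [show Sum.elim t x = Int.castRingHom ℚ ∘ n from funext hn,
      eval_comp_map_eq_zero_iff Int.cast_injective, ← Sum.elim_comp_inl_inr n] at hzero
    exact ⟨n ∘ Sum.inl, (hp _).2 ⟨_, hzero⟩, fun i => hn (.inl i)⟩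
end

section
/- Assume Mazur's conjecture in the following form: for every n and every finite family of polynomials p₁,…,p_r ∈ ℚ[x₁,…,x_n], the topological closure in ℝⁿ of the set {x ∈ ℚⁿ : p₁(x) = ⋯ = p_r(x) = 0} of rational common zeros has only finitely many connected components. Then the set of integers ℤ, viewed as a subset of ℚ, is not Diophantine over ℚ. -/
/-- Mazur's conjecture (affine form): for every finite family of polynomials over `ℚ`
in `n` variables, the topological closure in `ℝⁿ` of the set of their common rational
zeros has only finitely many connected components. -/
def MazurConjecture : Prop :=
  ∀ (n r : ℕ) (p : Fin r → MvPolynomial (Fin n) ℚ),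
    Finite (ConnectedComponents
      (closure {x : Fin n → ℝ | ∃ q : Fin n → ℚ,
        (∀ i, x i = (q i : ℝ)) ∧ ∀ j, MvPolynomial.eval q (p j) = 0} : Set (Fin n → ℝ)))

/-! The Diophantine definition exhibits `ℤ ⊆ ℚ` as a coordinate projection of the rational zero
set `V ⊆ ℚ^(1+k)` of one polynomial. That coordinate is continuous on `ℝ^(1+k)` and maps the
closure of `V` into the closed countable, hence totally disconnected, set `ℤ ⊆ ℝ`; so it is
constant on each connected component of the closure. Since it takes every integer value, the
closure has infinitely many components, contradicting Mazur's conjecture. -/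

open Set MvPolynomial

theorem Continuous.finite_range_of_isTotallyDisconnected {X Y : Type*} [TopologicalSpace X]
    [TopologicalSpace Y] [Finite (ConnectedComponents X)] {f : X → Y} (hf : Continuous f)
    (hT : IsTotallyDisconnected (range f)) : (range f).Finite := by
  have : TotallyDisconnectedSpace (range f) := totallyDisconnectedSpace_subtype_iff.mpr hT
  have hg : Continuous (Set.rangeFactorization f) := hf.rangeFactorization
  have hrange : range (Set.rangeFactorization f) = range hg.connectedComponentsLift :=
    ConnectedComponents.surjective_coe.range_comp hg.connectedComponentsLift
  rw [← coe_comp_rangeFactorization f, range_comp, hrange]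
  exact (finite_range _).image _

theorem infinite_connectedComponents_closure_of_image_eq_range_intCast {X : Type*}
    [TopologicalSpace X] {S : Set X} {g : X → ℝ} (hg : Continuous g)
    (hS : g '' S = range ((↑) : ℤ → ℝ)) : Infinite (ConnectedComponents (closure S)) := by
  by_contra hinf
  have : Finite (ConnectedComponents (closure S)) := not_infinite_iff_finite.mp hinf
  have hrange : range (g ∘ (↑) : closure S → ℝ) = g '' closure S := by
    rw [range_comp, Subtype.range_coe]
  have hsub : g '' closure S ⊆ range ((↑) : ℤ → ℝ) :=
    calc g '' closure S ⊆ closure (g '' S) := image_closure_subset_closure_image hg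
      _ = range ((↑) : ℤ → ℝ) := by rw [hS, Int.isClosedEmbedding_coe_real.isClosed_range.closure_eq]
  have hfinite := (hg.comp continuous_subtype_val).finite_range_of_isTotallyDisconnected
    ((countable_range _).mono (hrange ▸ hsub)).isTotallyDisconnected
  rw [hrange] at hfinite
  exact infinite_range_of_injective Int.cast_injective
    (hfinite.subset (hS ▸ image_mono subset_closure))

theorem IsDiophantine.exists_image_zeros_eq {R : Type*} [CommRing R] {ι : Type} [Fintype ι]
    {A : Set (ι → R)} (hA : IsDiophantine R ι A) :
    ∃ (k : ℕ) (p : MvPolynomial (ι ⊕ Fin k) R),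
      (fun s => s ∘ Sum.inl) '' {s | eval s p = 0} = A := by
  obtain ⟨k, p, hp⟩ := hA
  refine ⟨k, p, Set.ext fun t => ?_⟩
  rw [hp]
  constructor
  · rintro ⟨s, hs, rfl⟩
    exact ⟨s ∘ Sum.inr, by rwa [Sum.elim_comp_inl_inr]⟩
  · rintro ⟨x, hx⟩
    exact ⟨Sum.elim t x, hx, rfl⟩

theorem image_apply_ratCast_zeros {σ ι : Type*} (P : ι → MvPolynomial σ ℚ) (i : σ) :
    (fun x : σ → ℝ => x i) '' {x | ∃ q : σ → ℚ, (∀ i, x i = (q i : ℝ)) ∧ ∀ j, eval q (P j) = 0} =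
      (fun q => (q i : ℝ)) '' {q | ∀ j, eval q (P j) = 0} := by
  ext y
  constructor
  · rintro ⟨x, ⟨q, hxq, hq⟩, rfl⟩
    exact ⟨q, hq, (hxq i).symm⟩
  · rintro ⟨q, hq, rfl⟩
    exact ⟨fun i => q i, ⟨q, fun _ => rfl, hq⟩, rfl⟩

theorem MvPolynomial.image_comp_zeros_rename {R σ τ : Type*} [CommRing R] (e : σ ≃ τ)
    (p : MvPolynomial σ R) :
    (fun q => q ∘ e) '' {q : τ → R | eval q (rename e p) = 0} = {s | eval s p = 0} := by
  simp only [eval_rename]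
  exact image_preimage_eq {s | eval s p = 0} (e.injective.surjective_comp_right (γ := R))

/-- If Mazur's conjecture holds, then `ℤ`, viewed as a subset of `ℚ`, is not
Diophantine over `ℚ`. -/
theorem int_not_diophantine_over_Q_of_mazur (hM : MazurConjecture) :
    ¬ IsDiophantine ℚ (Fin 1) {t | ∃ n : ℤ, t 0 = (n : ℚ)} := by
  intro hD
  obtain ⟨k, p, hpA⟩ := hD.exists_image_zeros_eq
  set e : Fin 1 ⊕ Fin k ≃ Fin (1 + k) := finSumFinEquiv
  have hfin := hM (1 + k) 1 fun _ => rename e p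
  refine not_finite_iff_infinite.mpr ?_ hfin
  refine infinite_connectedComponents_closure_of_image_eq_range_intCast
    (continuous_apply (e (Sum.inl 0))) ?_
  calc _ = (fun q => ((q (e (Sum.inl 0)) : ℚ) : ℝ)) '' {q | ∀ _ : Fin 1, eval q (rename e p) = 0} :=
        image_apply_ratCast_zeros _ _
    _ = (fun t => (t 0 : ℝ)) '' ((fun s => s ∘ Sum.inl) ''
          ((fun q => q ∘ e) '' {q | eval q (rename e p) = 0})) := by
        simp only [forall_const, image_image]; rfl
    _ = range ((↑) : ℤ → ℝ) := by
        rw [MvPolynomial.image_comp_zeros_rename, hpA]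
        ext y
        constructor
        · rintro ⟨t, ⟨n, hn⟩, rfl⟩
          exact ⟨n, by simp [hn]⟩
        · rintro ⟨n, rfl⟩
          exact ⟨fun _ => n, ⟨n, rfl⟩, by simp⟩
end
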